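/- arXiv:1605.01936 — 3 statements merged into one kernel-verified Lean document; each statement's English description precedes it below -/
import Mathlib

section
/- Let ε be a real-valued random variable with a bounded Lebesgue density f that is even (f(−x) = f(x) for almost every x) and continuous at 0, and let W be a real-valued random variable independent of ε with E[W²] < ∞. Then lim_{t→0⁺} t^{−2}·E[|ε − tW|·1{|ε| ≤ t|W|}] = 2·f(0)·E[W²]. -/
/-!
Conditioning on `W = w` (independence and Fubini) and substituting `x = t u`,
`E[|ε - t w| 1{|ε| ≤ t |w|}] = t² ∫_{-|w|}^{|w|} |u - w| f(t u) du`.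
As `t → 0⁺` the inner integral tends to `f 0 ∫_{-|w|}^{|w|} |u - w| du = 2 f(0) w²` by dominated
convergence, since `f` is bounded and continuous at `0`; it is bounded by `2 (sup f) w²`, which
is `μ.map W`-integrable, so a second dominated convergence in `w` gives the limit.
-/

open MeasureTheory ProbabilityTheory Filter Set Topology

noncomputable def clipAbsSub (y x : ℝ) : ℝ := if |x| ≤ |y| then |x - y| else 0

lemma clipAbsSub_nonneg (y x : ℝ) : 0 ≤ clipAbsSub y x := by
  unfold clipAbsSub; split_ifs <;> positivity

lemma measurable_clipAbsSub : Measurable (Function.uncurry clipAbsSub) :=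
  Measurable.ite (measurableSet_le measurable_snd.abs measurable_fst.abs)
    (measurable_snd.sub measurable_fst).abs measurable_const

lemma clipAbsSub_eq_indicator (y : ℝ) :
    clipAbsSub y = (Icc (-|y|) |y|).indicator (fun x => |x - y|) := by
  ext x
  simp only [clipAbsSub, indicator_apply, mem_Icc, abs_le]

lemma clipAbsSub_le (y x : ℝ) : clipAbsSub y x ≤ 2 * |y| := by
  unfold clipAbsSub
  split_ifs with h
  · linarith [abs_sub x y]
  · positivity

lemma clipAbsSub_neg (y x : ℝ) : clipAbsSub (-y) (-x) = clipAbsSub y x := by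
  simp only [clipAbsSub, abs_neg, neg_sub_neg]
  rw [abs_sub_comm]

lemma clipAbsSub_mul {t : ℝ} (ht : 0 ≤ t) (y x : ℝ) :
    clipAbsSub (t * y) (t * x) = t * clipAbsSub y x := by
  rcases ht.eq_or_lt with rfl | ht
  · simp [clipAbsSub]
  simp only [clipAbsSub, ← mul_sub, abs_mul, abs_of_pos ht, mul_le_mul_iff_right₀ ht, mul_ite,
    mul_zero]

lemma integrable_clipAbsSub (y : ℝ) : Integrable (clipAbsSub y) := by
  rw [clipAbsSub_eq_indicator, integrable_indicator_iff measurableSet_Icc]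
  exact (continuous_id.sub continuous_const).abs.integrableOn_Icc

lemma integral_clipAbsSub (y : ℝ) : ∫ x, clipAbsSub y x = 2 * y ^ 2 := by
  wlog hy : 0 ≤ y generalizing y
  · rw [← neg_sq, ← this (-y) (by linarith), ← integral_neg_eq_self]
    exact integral_congr_ae (.of_forall fun x => by simpa using clipAbsSub_neg (-y) x)
  have habs : ∫ x in -y..y, |x - y| = ∫ x in -y..y, (y - x) := by
    refine intervalIntegral.integral_congr fun x hx => ?_
    rw [uIcc_of_le (by linarith)] at hx
    simp only [abs_of_nonpos (sub_nonpos.2 hx.2), neg_sub]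
  rw [clipAbsSub_eq_indicator, integral_indicator measurableSet_Icc, integral_Icc_eq_integral_Ioc,
    abs_of_nonneg hy, ← intervalIntegral.integral_of_le (by linarith), habs,
    intervalIntegral.integral_sub intervalIntegrable_const intervalIntegral.intervalIntegrable_id]
  simp only [integral_id, intervalIntegral.integral_const, smul_eq_mul]
  ring

lemma integral_clipAbsSub_mul_mul {t : ℝ} (ht : 0 < t) (y : ℝ) (g : ℝ → ℝ) :
    ∫ x, clipAbsSub (t * y) x * g x = t ^ 2 * ∫ u, clipAbsSub y u * g (t * u) := by
  have h := Measure.integral_comp_mul_left (fun x => clipAbsSub (t * y) x * g x) t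
  simp only [clipAbsSub_mul ht.le, mul_assoc, integral_const_mul, abs_inv, abs_of_pos ht,
    smul_eq_mul] at h
  field_simp at h
  exact h.symm

section Bounded

variable {g : ℝ → ℝ} {C : ℝ}

lemma norm_clipAbsSub_mul_le (hC : ∀ x, ‖g x‖ ≤ C) (y x : ℝ) :
    ‖clipAbsSub y x * g x‖ ≤ C * clipAbsSub y x := by
  rw [norm_mul, Real.norm_of_nonneg (clipAbsSub_nonneg y x), mul_comm]
  exact mul_le_mul_of_nonneg_right (hC x) (clipAbsSub_nonneg y x)

lemma norm_integral_clipAbsSub_mul_le (hC : ∀ x, ‖g x‖ ≤ C) (y : ℝ) :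
    ‖∫ x, clipAbsSub y x * g x‖ ≤ 2 * C * y ^ 2 :=
  calc ‖∫ x, clipAbsSub y x * g x‖ ≤ ∫ x, C * clipAbsSub y x :=
        norm_integral_le_of_norm_le ((integrable_clipAbsSub y).const_mul C)
          (.of_forall (norm_clipAbsSub_mul_le hC y))
    _ = 2 * C * y ^ 2 := by rw [integral_const_mul, integral_clipAbsSub]; ring

lemma tendsto_integral_clipAbsSub_mul_comp_mul (hg : Measurable g)
    (hC : ∀ x, ‖g x‖ ≤ C) (hg0 : ContinuousAt g 0) (y : ℝ) :
    Tendsto (fun t => ∫ u, clipAbsSub y u * g (t * u)) (𝓝 0) (𝓝 (2 * g 0 * y ^ 2)) := by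
  have hlim : 2 * g 0 * y ^ 2 = ∫ u, clipAbsSub y u * g 0 := by
    rw [integral_mul_const, integral_clipAbsSub]; ring
  rw [hlim]
  refine tendsto_integral_filter_of_dominated_convergence (fun u => C * clipAbsSub y u)
    (.of_forall fun t => ?_) (.of_forall fun t => .of_forall fun u => ?_)
    ((integrable_clipAbsSub y).const_mul C) (.of_forall fun u => ?_)
  · exact (integrable_clipAbsSub y).aestronglyMeasurable.mul
      (hg.comp (measurable_const_mul t)).aestronglyMeasurable
  · exact norm_clipAbsSub_mul_le (fun x => hC (t * x)) y u
  · exact (hg0.tendsto.comp ((continuous_mul_const u).tendsto' 0 0 (zero_mul u))).const_mul _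

lemma tendsto_integral_integral_clipAbsSub_mul_comp_mul {ν : Measure ℝ}
    (hν : Integrable (fun y => y ^ 2) ν) (hg : Measurable g)
    (hC : ∀ x, ‖g x‖ ≤ C) (hg0 : ContinuousAt g 0) :
    Tendsto (fun t => ∫ y, (∫ u, clipAbsSub y u * g (t * u)) ∂ν) (𝓝 0)
      (𝓝 (2 * g 0 * ∫ y, y ^ 2 ∂ν)) := by
  rw [← integral_const_mul (2 * g 0) (fun y => y ^ 2)]
  refine tendsto_integral_filter_of_dominated_convergence (fun y => 2 * C * y ^ 2)
    (.of_forall fun t => ?_) (.of_forall fun t => .of_forall fun y => ?_)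
    (hν.const_mul _) (.of_forall fun y => ?_)
  · exact ((measurable_clipAbsSub.mul (hg.comp (measurable_snd.const_mul t))).stronglyMeasurable
      |>.integral_prod_right').aestronglyMeasurable
  · exact norm_integral_clipAbsSub_mul_le (fun x => hC (t * x)) y
  · simpa only [mul_assoc] using tendsto_integral_clipAbsSub_mul_comp_mul hg hC hg0 y

end Bounded

lemma integral_withDensity_ofReal {α : Type*} [MeasurableSpace α] {ν : Measure α} {f : α → ℝ}
    (hf : Measurable f) (hf0 : ∀ x, 0 ≤ f x) (g : α → ℝ) :
    ∫ x, g x ∂ν.withDensity (fun x => ENNReal.ofReal (f x)) = ∫ x, f x * g x ∂ν := by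
  simp only [integral_withDensity_eq_integral_toReal_smul hf.ennreal_ofReal
    (.of_forall fun _ => ENNReal.ofReal_lt_top), ENNReal.toReal_ofReal (hf0 _), smul_eq_mul]

lemma ProbabilityTheory.IndepFun.integral_comp_eq_integral_integral {Ω α β E : Type*}
    [MeasurableSpace Ω] [MeasurableSpace α] [MeasurableSpace β] [NormedAddCommGroup E]
    [NormedSpace ℝ E] {μ : Measure Ω} [IsFiniteMeasure μ] {X : Ω → α} {Y : Ω → β}
    (hX : AEMeasurable X μ) (hY : AEMeasurable Y μ) (hXY : IndepFun X Y μ) {g : α → β → E}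
    (hg : Integrable (Function.uncurry g) ((μ.map X).prod (μ.map Y))) :
    ∫ ω, g (X ω) (Y ω) ∂μ = ∫ y, ∫ x, g x y ∂μ.map X ∂μ.map Y := by
  have hmap := (indepFun_iff_map_prod_eq_prod_map_map hX hY).1 hXY
  calc ∫ ω, g (X ω) (Y ω) ∂μ = ∫ p, Function.uncurry g p ∂μ.map (fun ω => (X ω, Y ω)) :=
        (integral_map (hX.prodMk hY) (hmap ▸ hg.1)).symm
    _ = _ := by rw [hmap]; exact integral_prod_symm _ hg

lemma integral_clipAbsSub_of_indepFun_of_density {Ω : Type*} [MeasurableSpace Ω]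
    {μ : Measure Ω} [IsFiniteMeasure μ] {X Y : Ω → ℝ} (hX : Measurable X) (hY : Measurable Y)
    (hXY : IndepFun X Y μ) (hYi : Integrable Y μ) {f : ℝ → ℝ} (hf : Measurable f)
    (hf0 : ∀ x, 0 ≤ f x)
    (hdens : μ.map X = (volume : Measure ℝ).withDensity (fun x => ENNReal.ofReal (f x)))
    {t : ℝ} (ht : 0 < t) :
    ∫ ω, clipAbsSub (t * Y ω) (X ω) ∂μ =
      t ^ 2 * ∫ y, (∫ u, clipAbsSub y u * f (t * u)) ∂μ.map Y := by
  have : IsFiniteMeasure (μ.map X) := Measure.isFiniteMeasure_map μ X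
  have hint :
      Integrable (fun p : ℝ × ℝ => clipAbsSub (t * p.2) p.1) ((μ.map X).prod (μ.map Y)) := by
    have hYabs : Integrable (fun y : ℝ => |y|) (μ.map Y) :=
      (integrable_map_measure continuous_abs.aestronglyMeasurable hY.aemeasurable).2 hYi.abs
    refine Integrable.mono' ((hYabs.const_mul (2 * t)).comp_snd _) ?_ (.of_forall fun p => ?_)
    · exact (measurable_clipAbsSub.comp
        ((measurable_snd.const_mul t).prodMk measurable_fst)).aestronglyMeasurable
    · rw [Real.norm_of_nonneg (clipAbsSub_nonneg _ _)]
      simpa [abs_mul, abs_of_pos ht, mul_assoc] using clipAbsSub_le (t * p.2) p.1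
  rw [hXY.integral_comp_eq_integral_integral hX.aemeasurable hY.aemeasurable
    (g := fun x y => clipAbsSub (t * y) x) hint, ← integral_const_mul]
  congr 1 with y
  rw [hdens, integral_withDensity_ofReal hf hf0]
  simp only [mul_comm (f _), integral_clipAbsSub_mul_mul ht]

theorem tendsto_expectation_abs_sub_indicator_general
    {Ω : Type*} [MeasurableSpace Ω] (μ : Measure Ω) [IsProbabilityMeasure μ]
    (ε W : Ω → ℝ) (hε : Measurable ε) (hW : Measurable W)
    (hindep : IndepFun ε W μ)
    (f : ℝ → ℝ) (hfm : Measurable f) (hf0 : ∀ x, 0 ≤ f x)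
    (hbdd : ∃ C : ℝ, ∀ x, f x ≤ C)
    (hcont : ContinuousAt f 0)
    (hdens : μ.map ε = (volume : Measure ℝ).withDensity (fun x => ENNReal.ofReal (f x)))
    (hint : Integrable (fun ω => (W ω) ^ 2) μ) :
    Tendsto
      (fun t : ℝ => (∫ ω, (if |ε ω| ≤ t * |W ω| then |ε ω - t * W ω| else 0) ∂μ) / t ^ 2)
      (nhdsWithin 0 (Set.Ioi 0)) (nhds (2 * f 0 * ∫ ω, (W ω) ^ 2 ∂μ)) := by
  obtain ⟨C, hC⟩ := hbdd
  have hW2 : Integrable (fun y => y ^ 2) (μ.map W) :=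
    (integrable_map_measure (by fun_prop) hW.aemeasurable).2 hint
  have hWi : Integrable W μ :=
    ((memLp_two_iff_integrable_sq hW.aestronglyMeasurable).2 hint).integrable one_le_two
  have hlim := (tendsto_integral_integral_clipAbsSub_mul_comp_mul hW2 hfm
    (fun x => (Real.norm_of_nonneg (hf0 x)).trans_le (hC x)) hcont).mono_left
    (nhdsWithin_le_nhds (s := Ioi 0))
  rw [integral_map hW.aemeasurable (by fun_prop)] at hlim
  refine hlim.congr' ?_
  filter_upwards [self_mem_nhdsWithin] with t (ht : 0 < t)
  have hclip : ∀ ω, (if |ε ω| ≤ t * |W ω| then |ε ω - t * W ω| else 0)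
      = clipAbsSub (t * W ω) (ε ω) := fun ω => by
    simp only [clipAbsSub, abs_mul, abs_of_pos ht]
  simp only [hclip, integral_clipAbsSub_of_indepFun_of_density hε hW hindep hWi hfm hf0 hdens ht]
  field_simp

/-- If `ε` has a bounded, even Lebesgue density `f` continuous at `0`, and `W` is
independent of `ε` with `E[W²] < ∞`, then
`t⁻² · E[|ε − tW| · 1{|ε| ≤ t|W|}] → 2·f 0·E[W²]` as `t → 0⁺`. -/
theorem tendsto_expectation_abs_sub_indicator
    {Ω : Type*} [MeasurableSpace Ω] (μ : Measure Ω) [IsProbabilityMeasure μ]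
    (ε W : Ω → ℝ) (hε : Measurable ε) (hW : Measurable W)
    (hindep : IndepFun ε W μ)
    (f : ℝ → ℝ) (hfm : Measurable f) (hf0 : ∀ x, 0 ≤ f x)
    (hbdd : ∃ C : ℝ, ∀ x, f x ≤ C)
    (heven : ∀ᵐ x ∂(volume : Measure ℝ), f (-x) = f x)
    (hcont : ContinuousAt f 0)
    (hdens : μ.map ε = (volume : Measure ℝ).withDensity (fun x => ENNReal.ofReal (f x)))
    (hint : Integrable (fun ω => (W ω) ^ 2) μ) :
    Tendsto
      (fun t : ℝ => (∫ ω, (if |ε ω| ≤ t * |W ω| then |ε ω - t * W ω| else 0) ∂μ) / t ^ 2)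
      (nhdsWithin 0 (Set.Ioi 0)) (nhds (2 * f 0 * ∫ ω, (W ω) ^ 2 ∂μ)) :=
  tendsto_expectation_abs_sub_indicator_general μ ε W hε hW hindep f hfm hf0 hbdd hcont hdens hint
end

section
/- Let ε be a real-valued random variable with a bounded Lebesgue density f that is continuous at 0, and let W be a real-valued random variable independent of ε with E[W²] < ∞. Then lim_{t→0⁺} t^{−2}·E[|ε|·1{|ε| ≤ t|W|}] = f(0)·E[W²]. -/
open MeasureTheory ProbabilityTheory Filter

lemma if_abs_eq_indicator (a : ℝ) :
    (fun x : ℝ => if |x| ≤ a then |x| else 0) = (Set.Icc (-a) a).indicator abs := by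
  funext x
  by_cases h : |x| ≤ a <;> simp [Set.indicator, Set.mem_Icc, ← abs_le, h]

lemma integrable_if_abs (a : ℝ) :
    Integrable (fun x : ℝ => if |x| ≤ a then |x| else 0) (volume : Measure ℝ) := by
  rw [if_abs_eq_indicator]
  exact (continuous_abs.integrableOn_Icc).integrable_indicator measurableSet_Icc

lemma integral_if_abs {a : ℝ} (ha : 0 ≤ a) :
    ∫ x, (if |x| ≤ a then |x| else 0) = a ^ 2 := by
  rw [if_abs_eq_indicator, MeasureTheory.integral_indicator measurableSet_Icc,
      MeasureTheory.integral_Icc_eq_integral_Ioc,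
      ← intervalIntegral.integral_of_le (by linarith : -a ≤ a)]
  have h1 : ∫ x in (-a)..(0:ℝ), |x| = a ^ 2 / 2 := by
    rw [intervalIntegral.integral_congr (g := fun x => -x) ?_]
    · rw [intervalIntegral.integral_neg, integral_id]; ring
    · intro x hx
      rw [Set.uIcc_of_le (by linarith : -a ≤ (0:ℝ))] at hx
      exact abs_of_nonpos hx.2
  have h2 : ∫ x in (0:ℝ)..a, |x| = a ^ 2 / 2 := by
    rw [intervalIntegral.integral_congr (g := fun x => x) ?_]
    · rw [integral_id]; ring
    · intro x hx
      rw [Set.uIcc_of_le ha] at hx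
      exact abs_of_nonneg hx.1
  rw [← intervalIntegral.integral_add_adjacent_intervals (b := (0:ℝ))
      (continuous_abs.intervalIntegrable _ _) (continuous_abs.intervalIntegrable _ _), h1, h2]
  ring

/-- If `ε` has a bounded Lebesgue density `f` continuous at `0`, and `W` is independent of
`ε` with `E[W²] < ∞`, then `t⁻² · E[|ε| · 1{|ε| ≤ t|W|}] → f 0 · E[W²]` as `t → 0⁺`. -/
theorem tendsto_expectation_abs_indicator
    {Ω : Type*} [MeasurableSpace Ω] (μ : Measure Ω) [IsProbabilityMeasure μ]
    (ε W : Ω → ℝ) (hε : Measurable ε) (hW : Measurable W)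
    (hindep : IndepFun ε W μ)
    (f : ℝ → ℝ) (hfm : Measurable f) (hf0 : ∀ x, 0 ≤ f x)
    (hbdd : ∃ C : ℝ, ∀ x, f x ≤ C)
    (hcont : ContinuousAt f 0)
    (hdens : μ.map ε = (volume : Measure ℝ).withDensity (fun x => ENNReal.ofReal (f x)))
    (hint : Integrable (fun ω => (W ω) ^ 2) μ) :
    Tendsto
      (fun t : ℝ => (∫ ω, (if |ε ω| ≤ t * |W ω| then |ε ω| else 0) ∂μ) / t ^ 2)
      (nhdsWithin 0 (Set.Ioi 0)) (nhds (f 0 * ∫ ω, (W ω) ^ 2 ∂μ)) := by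
  obtain ⟨C, hC⟩ := hbdd
  have hC0 : 0 ≤ C := le_trans (hf0 0) (hC 0)
  -- the one-dimensional truncated integral
  set G : ℝ → ℝ := fun a => ∫ x, f x * (if |x| ≤ a then |x| else 0) with hGdef
  -- basic facts about G
  have hinteg : ∀ a : ℝ, Integrable (fun x => f x * (if |x| ≤ a then |x| else 0))
      (volume : Measure ℝ) := by
    intro a
    refine Integrable.mono' ((integrable_if_abs a).const_mul C)
      ((hfm.mul ((measurable_abs.ite (measurableSet_le measurable_abs measurable_const)
        measurable_const))).aestronglyMeasurable) ?_
    filter_upwards with x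
    rw [Real.norm_eq_abs, abs_of_nonneg (mul_nonneg (hf0 x)
      (by by_cases h : |x| ≤ a <;> simp [h, abs_nonneg]))]
    by_cases h : |x| ≤ a
    · simp only [h, if_true]
      exact mul_le_mul_of_nonneg_right (hC x) (abs_nonneg x)
    · simp [h]
  have hG0 : ∀ a : ℝ, 0 ≤ G a := by
    intro a
    exact integral_nonneg fun x => mul_nonneg (hf0 x)
      (by by_cases h : |x| ≤ a <;> simp [h, abs_nonneg])
  have hGC : ∀ a : ℝ, 0 ≤ a → G a ≤ C * a ^ 2 := by
    intro a ha
    calc G a ≤ ∫ x, C * (if |x| ≤ a then |x| else 0) := by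
          refine integral_mono (hinteg a) ((integrable_if_abs a).const_mul C) fun x => ?_
          by_cases h : |x| ≤ a
          · simpa [h] using mul_le_mul_of_nonneg_right (hC x) (abs_nonneg x)
          · simp [h]
      _ = C * a ^ 2 := by rw [integral_const_mul, integral_if_abs ha]
  have hGmono : Monotone G := by
    intro a b hab
    refine integral_mono (hinteg a) (hinteg b) fun x => ?_
    by_cases h : |x| ≤ a
    · simp [h, h.trans hab]
    · by_cases h' : |x| ≤ b <;> simp [h, h', mul_nonneg (hf0 x) (abs_nonneg x)]
  -- the key estimate
  have hGkey : ∀ η : ℝ, 0 < η → ∃ a0 : ℝ, 0 < a0 ∧ ∀ a : ℝ, 0 ≤ a → a ≤ a0 →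
      |G a - f 0 * a ^ 2| ≤ η * a ^ 2 := by
    intro η hη
    obtain ⟨δ, hδ, hδ'⟩ := Metric.continuousAt_iff.mp hcont η hη
    refine ⟨δ / 2, by linarith, fun a ha haδ => ?_⟩
    have hfb : ∀ x : ℝ, |x| ≤ a → |f x - f 0| ≤ η := by
      intro x hx
      have hxδ : dist x 0 < δ := by
        rw [Real.dist_eq, sub_zero]
        calc |x| ≤ a := hx
          _ ≤ δ / 2 := haδ
          _ < δ := by linarith
      have h2 := hδ' hxδ
      rw [Real.dist_eq] at h2
      exact h2.le
    have heq : G a - f 0 * a ^ 2 = ∫ x, (f x - f 0) * (if |x| ≤ a then |x| else 0) := by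
      rw [hGdef]
      simp only [sub_mul]
      rw [integral_sub (hinteg a) ((integrable_if_abs a).const_mul (f 0)),
        integral_const_mul, integral_if_abs ha]
    rw [heq]
    calc |∫ x, (f x - f 0) * (if |x| ≤ a then |x| else 0)|
        ≤ ∫ x, |(f x - f 0) * (if |x| ≤ a then |x| else 0)| := by
          simpa [Real.norm_eq_abs] using
            norm_integral_le_integral_norm (fun x => (f x - f 0) * (if |x| ≤ a then |x| else 0))
      _ ≤ ∫ x, η * (if |x| ≤ a then |x| else 0) := by
          have hint2 : Integrable (fun x => (f x - f 0) * (if |x| ≤ a then |x| else 0))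
              (volume : Measure ℝ) := by
            have h3 := (hinteg a).sub ((integrable_if_abs a).const_mul (f 0))
            exact h3.congr (Filter.Eventually.of_forall fun x => by
              simp only [Pi.sub_apply]; ring)
          refine integral_mono hint2.abs ((integrable_if_abs a).const_mul η) fun x => ?_
          by_cases h : |x| ≤ a
          · simp only [h, if_true, abs_mul, abs_abs]
            exact mul_le_mul_of_nonneg_right (hfb x h) (abs_nonneg x)
          · simp [h]
      _ = η * a ^ 2 := by rw [integral_const_mul, integral_if_abs ha]
  -- identify the expectation with an integral over the law of W
  set ν : Measure ℝ := μ.map W with hνdef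
  have hνprob : IsProbabilityMeasure ν := Measure.isProbabilityMeasure_map hW.aemeasurable
  have hW2 : Integrable (fun w : ℝ => w ^ 2) ν := by
    rw [hνdef, integrable_map_measure (by fun_prop) hW.aemeasurable]
    exact hint
  have hW2eq : ∫ w, w ^ 2 ∂ν = ∫ ω, (W ω) ^ 2 ∂μ := by
    rw [hνdef, integral_map hW.aemeasurable (by fun_prop)]
  have hWabs : Integrable (fun w : ℝ => |w|) ν := by
    refine Integrable.mono' (g := fun w : ℝ => w ^ 2 + 1)
      (by simpa using hW2.add (integrable_const 1)) measurable_abs.aestronglyMeasurable ?_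
    filter_upwards with w
    rw [Real.norm_eq_abs, abs_abs]
    nlinarith [abs_nonneg w, sq_abs w, sq_nonneg (|w| - 1)]
  -- the joint law is the product
  have hmap : μ.map (fun ω => (ε ω, W ω)) = (μ.map ε).prod ν :=
    (indepFun_iff_map_prod_eq_prod_map_map hε.aemeasurable hW.aemeasurable).mp hindep
  -- density rewriting
  have hdens' : ∀ g : ℝ → ℝ, Measurable g →
      ∫ x, g x ∂(μ.map ε) = ∫ x, f x * g x := by
    intro g hg
    have : (fun x => ENNReal.ofReal (f x)) = (fun x => (((f x).toNNReal : NNReal) : ENNReal)) := rfl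
    rw [hdens, this, integral_withDensity_eq_integral_smul hfm.real_toNNReal g]
    congr 1
    funext x
    rw [NNReal.smul_def, smul_eq_mul, Real.coe_toNNReal _ (hf0 x)]
  -- key identity for each t
  have hkey : ∀ t : ℝ, (∫ ω, (if |ε ω| ≤ t * |W ω| then |ε ω| else 0) ∂μ)
      = ∫ w, G (t * |w|) ∂ν := by
    intro t
    have hmeas : Measurable (fun p : ℝ × ℝ => if |p.1| ≤ t * |p.2| then |p.1| else 0) := by
      refine Measurable.ite ?_ (by fun_prop) measurable_const
      exact measurableSet_le (by fun_prop) (by fun_prop)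
    have hprodint : Integrable (fun p : ℝ × ℝ => if |p.1| ≤ t * |p.2| then |p.1| else 0)
        ((μ.map ε).prod ν) := by
      have : IsProbabilityMeasure (μ.map ε) := Measure.isProbabilityMeasure_map hε.aemeasurable
      have hsnd : Measure.map Prod.snd ((μ.map ε).prod ν) = ν := by
        rw [Measure.map_snd_prod]
        simp
      have hdom : Integrable (fun p : ℝ × ℝ => |t| * |p.2|) ((μ.map ε).prod ν) := by
        have h1 := (hWabs.const_mul |t|)
        rw [← hsnd] at h1
        exact h1.comp_measurable measurable_snd
      refine Integrable.mono' hdom hmeas.aestronglyMeasurable ?_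
      · filter_upwards with p
        rw [Real.norm_eq_abs]
        by_cases h : |p.1| ≤ t * |p.2|
        · rw [if_pos h, abs_abs]
          calc |p.1| ≤ t * |p.2| := h
            _ ≤ abs (t * |p.2|) := le_abs_self _
            _ = |t| * |p.2| := by rw [abs_mul, abs_abs]
        · rw [if_neg h, abs_zero]
          positivity
    calc ∫ ω, (if |ε ω| ≤ t * |W ω| then |ε ω| else 0) ∂μ
        = ∫ p, (if |p.1| ≤ t * |p.2| then |p.1| else 0)
            ∂(μ.map (fun ω => (ε ω, W ω))) := by
          rw [integral_map (hε.prodMk hW).aemeasurable hmeas.aestronglyMeasurable]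
      _ = ∫ p, (if |p.1| ≤ t * |p.2| then |p.1| else 0) ∂((μ.map ε).prod ν) := by rw [hmap]
      _ = ∫ w, ∫ x, (if |x| ≤ t * |w| then |x| else 0) ∂(μ.map ε) ∂ν :=
          integral_prod_symm _ hprodint
      _ = ∫ w, G (t * |w|) ∂ν := by
          refine integral_congr_ae (Filter.Eventually.of_forall fun w => ?_)
          show ∫ x, (if |x| ≤ t * |w| then |x| else 0) ∂(μ.map ε) = G (t * |w|)
          rw [hdens' (fun x => if |x| ≤ t * |w| then |x| else 0) (by
            refine Measurable.ite ?_ measurable_abs measurable_const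
            exact measurableSet_le measurable_abs measurable_const)]
  -- rewrite target
  rw [← hW2eq]
  have heqfun : ∀ t : ℝ, (∫ ω, (if |ε ω| ≤ t * |W ω| then |ε ω| else 0) ∂μ) / t ^ 2
      = ∫ w, G (t * |w|) / t ^ 2 ∂ν := by
    intro t
    rw [hkey t, ← integral_div]
  refine Tendsto.congr (fun t => (heqfun t).symm) ?_
  have hlim : f 0 * ∫ w, w ^ 2 ∂ν = ∫ w, f 0 * w ^ 2 ∂ν := (integral_const_mul _ _).symm
  rw [hlim]
  -- dominated convergence
  refine tendsto_integral_filter_of_dominated_convergence (fun w => C * w ^ 2)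
    ?_ ?_ (hW2.const_mul C) ?_
  · filter_upwards with t
    exact (((hGmono.measurable).comp ((measurable_const.mul measurable_abs))).div_const
      _).aestronglyMeasurable
  · filter_upwards [self_mem_nhdsWithin] with t (ht : (0:ℝ) < t)
    filter_upwards with w
    rw [Real.norm_eq_abs, abs_of_nonneg (div_nonneg (hG0 _) (by positivity)),
      div_le_iff₀ (by positivity)]
    calc G (t * |w|) ≤ C * (t * |w|) ^ 2 :=
          hGC _ (mul_nonneg ht.le (abs_nonneg w))
      _ = C * w ^ 2 * t ^ 2 := by rw [mul_pow, sq_abs]; ring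
  · filter_upwards with w
    rw [Metric.tendsto_nhdsWithin_nhds]
    intro e he
    have hη : 0 < e / (w ^ 2 + 1) := by positivity
    obtain ⟨a0, ha0, hest⟩ := hGkey _ hη
    refine ⟨a0 / (|w| + 1), by positivity, fun t ht hdt => ?_⟩
    have ht' : 0 < t := ht
    have htw : t * |w| ≤ a0 := by
      rw [Real.dist_eq, sub_zero, abs_of_pos ht'] at hdt
      have h1 : t * |w| ≤ t * (|w| + 1) := by nlinarith [abs_nonneg w]
      have h2 : t * (|w| + 1) < a0 := by
        rw [lt_div_iff₀ (by positivity)] at hdt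
        nlinarith [abs_nonneg w]
      linarith
    have := hest (t * |w|) (mul_nonneg ht'.le (abs_nonneg w)) htw
    rw [Real.dist_eq]
    have heq2 : G (t * |w|) / t ^ 2 - f 0 * w ^ 2
        = (G (t * |w|) - f 0 * (t * |w|) ^ 2) / t ^ 2 := by
      have hsq : (t * |w|) ^ 2 = t ^ 2 * w ^ 2 := by rw [mul_pow, sq_abs]
      rw [hsq]
      field_simp
    rw [heq2, abs_div, abs_of_nonneg (by positivity : (0:ℝ) ≤ t ^ 2),
      div_lt_iff₀ (by positivity)]
    calc |G (t * |w|) - f 0 * (t * |w|) ^ 2| ≤ e / (w ^ 2 + 1) * (t * |w|) ^ 2 := this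
      _ = e / (w ^ 2 + 1) * w ^ 2 * t ^ 2 := by rw [mul_pow, sq_abs]; ring
      _ < e * t ^ 2 := by
          have h5 : e / (w ^ 2 + 1) * w ^ 2 < e := by
            rw [div_mul_eq_mul_div, div_lt_iff₀ (by positivity)]
            nlinarith [sq_nonneg w]
          exact mul_lt_mul_of_pos_right h5 (by positivity)
end

section
/- Let n be a positive integer, y ∈ ℝⁿ, z ∈ ℝⁿ and m ∈ ℝ, and define g(b) = Σ_{i=1}^n |y_i − m − b·z_i| for b ∈ ℝ. If Σ_{i : y_i = m} |z_i| ≥ |Σ_{i : y_i ≠ m} sign(y_i − m)·z_i|, then g(0) ≤ g(b) for every b ∈ ℝ; that is, b = 0 is a global minimizer of g. -/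
open Finset

lemma sign_mul_self_eq_abs (a : ℝ) : Real.sign a * a = |a| := by
  rcases lt_trichotomy a 0 with h | h | h
  · rw [Real.sign_of_neg h, abs_of_neg h]; ring
  · simp [h]
  · rw [Real.sign_of_pos h, abs_of_pos h]; ring

lemma sign_mul_le_abs (a w : ℝ) : Real.sign a * w ≤ |w| := by
  calc Real.sign a * w ≤ |Real.sign a * w| := le_abs_self _
    _ = |Real.sign a| * |w| := abs_mul _ _
    _ ≤ 1 * |w| := by
        apply mul_le_mul_of_nonneg_right _ (abs_nonneg w)
        rcases lt_trichotomy a 0 with h | h | h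
        · simp [Real.sign_of_neg h]
        · simp [h]
        · simp [Real.sign_of_pos h]
    _ = |w| := one_mul _

/-- If `Σ_{i : yᵢ = m} |zᵢ| ≥ |Σ_{i : yᵢ ≠ m} sign(yᵢ − m)·zᵢ|`, then `b = 0` is a global
minimizer of `g(b) = Σ |yᵢ − m − b·zᵢ|`. -/
theorem zero_minimizes_perturbed_l1
    (n : ℕ) (y z : Fin n → ℝ) (m : ℝ)
    (g : ℝ → ℝ) (hg : ∀ b : ℝ, g b = ∑ i, |y i - m - b * z i|)
    (h : |∑ i ∈ Finset.univ.filter (fun i => y i ≠ m), Real.sign (y i - m) * z i|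
        ≤ ∑ i ∈ Finset.univ.filter (fun i => y i = m), |z i|) :
    ∀ b : ℝ, g 0 ≤ g b := by
  intro b
  rw [hg 0, hg b]
  simp only [zero_mul, sub_zero]
  set S := ∑ i ∈ Finset.univ.filter (fun i => y i ≠ m), Real.sign (y i - m) * z i with hS
  set T := ∑ i ∈ Finset.univ.filter (fun i => y i = m), |z i| with hT
  rw [← Finset.sum_filter_add_sum_filter_not Finset.univ (fun i => y i = m)
      (fun i => |y i - m|),
    ← Finset.sum_filter_add_sum_filter_not Finset.univ (fun i => y i = m)
      (fun i => |y i - m - b * z i|)]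
  have h1 : ∑ i ∈ Finset.univ.filter (fun i => y i = m), |y i - m| = 0 := by
    apply Finset.sum_eq_zero
    intro i hi
    simp only [Finset.mem_filter] at hi
    simp [hi.2]
  have h2 : ∑ i ∈ Finset.univ.filter (fun i => y i = m), |y i - m - b * z i|
      = |b| * T := by
    rw [hT, Finset.mul_sum]
    apply Finset.sum_congr rfl
    intro i hi
    simp only [Finset.mem_filter] at hi
    rw [hi.2, show m - m - b * z i = -(b * z i) by ring, abs_neg, abs_mul]
  have h3 : ∑ i ∈ Finset.univ.filter (fun i => ¬ y i = m), |y i - m|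
      ≤ ∑ i ∈ Finset.univ.filter (fun i => ¬ y i = m), |y i - m - b * z i| + b * S := by
    rw [hS, Finset.mul_sum, ← Finset.sum_add_distrib]
    apply Finset.sum_le_sum
    intro i _
    have : |y i - m| = Real.sign (y i - m) * (y i - m - b * z i)
        + b * (Real.sign (y i - m) * z i) := by
      rw [← sign_mul_self_eq_abs (y i - m)]; ring
    rw [this]
    have := sign_mul_le_abs (y i - m) (y i - m - b * z i)
    linarith
  have h4 : b * S ≤ |b| * T := by
    calc b * S ≤ |b * S| := le_abs_self _
      _ = |b| * |S| := abs_mul _ _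
      _ ≤ |b| * T := mul_le_mul_of_nonneg_left h (abs_nonneg b)
  linarith
end
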